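/- For every n ≥ 2, the enhanced power graph P_E(Q_{4n}) of the generalized quaternion group Q_{4n} of order 4n is not minimally edge connected. -/

import Mathlib

/-! In `P_E(Q_{4n})` the identity and the unique involution `a^n` are adjacent to every other
vertex, while the only cyclic subgroup containing `xa 0` is `⟨xa 0⟩`, of order 4; so `xa 0` has
degree 3 and `κ' ≤ 3`. Deleting `ε = {1, a^n}` and at most two further edges leaves the graph
connected: some third vertex still joins `1` to `a^n`, every other vertex `u` keeps an edge to
one of them unless both were deleted, and in that case `u` reaches `1` through `u⁻¹`. Hence
`κ'(P_E − ε) ≥ 3 > κ' − 1`. -/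

/-- The degree of a vertex: the number of its neighbours. -/
noncomputable def gDeg {V : Type*} (G : SimpleGraph V) (v : V) : ℕ :=
  (G.neighborSet v).ncard

/-- The minimum degree of a graph. -/
noncomputable def minDeg {V : Type*} (G : SimpleGraph V) : ℕ :=
  sInf (Set.range (gDeg G))

/-- The edge connectivity: the minimum size of a set of edges whose removal
disconnects the graph. -/
noncomputable def edgeConn {V : Type*} (G : SimpleGraph V) : ℕ :=
  sInf {n : ℕ | ∃ S : Set (Sym2 V), S ⊆ G.edgeSet ∧ S.ncard = n ∧
    ¬ (G.deleteEdges S).Connected}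

/-- The vertex connectivity: the minimum size of a set of vertices whose removal
disconnects the graph or leaves a single vertex. -/
noncomputable def vertexConn {V : Type*} (G : SimpleGraph V) : ℕ :=
  sInf {n : ℕ | ∃ S : Set V, S.ncard = n ∧ Sᶜ.Nonempty ∧
    (¬ (G.induce Sᶜ).Preconnected ∨ Sᶜ.ncard = 1)}

/-- A graph is minimally edge connected if deleting any edge decreases the
edge connectivity by one. -/
def MinEdgeConnected {V : Type*} (G : SimpleGraph V) : Prop :=
  ∀ e ∈ G.edgeSet, edgeConn (G.deleteEdges {e}) = edgeConn G - 1

/-- A graph is minimally connected if deleting any edge decreases the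
vertex connectivity by one. -/
def MinConnected {V : Type*} (G : SimpleGraph V) : Prop :=
  ∀ e ∈ G.edgeSet, vertexConn (G.deleteEdges {e}) = vertexConn G - 1

/-- The power graph of a group: distinct `x, y` are adjacent iff one is a
natural power of the other. -/
def powerGraph (G : Type*) [Group G] : SimpleGraph G :=
  SimpleGraph.fromRel (fun x y => ∃ m : ℕ, y = x ^ m)

/-- The enhanced power graph of a group: distinct `x, y` are adjacent iff they
lie in a common cyclic subgroup. -/
def enhancedPowerGraph (G : Type*) [Group G] : SimpleGraph G :=
  SimpleGraph.fromRel
    (fun x y => ∃ z : G, x ∈ Subgroup.zpowers z ∧ y ∈ Subgroup.zpowers z)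

/-- The order superpower graph of a group: distinct `x, y` are adjacent iff the
order of one divides the order of the other. -/
def superpowerGraph (G : Type*) [Group G] : SimpleGraph G :=
  SimpleGraph.fromRel (fun x y => orderOf x ∣ orderOf y)

theorem Sym2.exists_mk_notMem_of_ncard_add_two_lt {V : Type*} [Finite V] {p q : V} (hpq : p ≠ q)
    {S : Set (Sym2 V)} (hS : S.ncard + 2 < Nat.card V) :
    ∃ w, w ≠ p ∧ w ≠ q ∧ s(p, w) ∉ S ∧ s(q, w) ∉ S := by
  classical
  by_contra! h
  have hle : ({p, q}ᶜ : Set V).ncard ≤ S.ncard := by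
    refine Set.ncard_le_ncard_of_injOn (fun w => if s(p, w) ∈ S then s(p, w) else s(q, w))
      (fun w hw => ?_) (fun w hw w' hw' heq => ?_)
    · simp only [Set.mem_compl_iff, Set.mem_insert_iff, Set.mem_singleton_iff, not_or] at hw
      split_ifs with hpw
      exacts [hpw, h w hw.1 hw.2 hpw]
    · simp only [Set.mem_compl_iff, Set.mem_insert_iff, Set.mem_singleton_iff, not_or] at hw hw'
      dsimp only at heq
      split_ifs at heq <;> simp_all
  rw [Set.ncard_compl, Set.ncard_pair hpq] at hle
  omega

namespace SimpleGraph

variable {V : Type*} {G : SimpleGraph V}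

theorem edgeConn_le_gDeg {u v : V} (huv : u ≠ v) : edgeConn G ≤ gDeg G v := by
  classical
  refine Nat.sInf_le ⟨G.incidenceSet v, G.incidenceSet_subset v,
    Nat.card_congr (G.incidenceSetEquivNeighborSet v), fun hconn => ?_⟩
  obtain ⟨_ | ⟨hadj, _⟩⟩ := hconn.preconnected v u
  · exact huv rfl
  · rw [deleteEdges_adj] at hadj
    exact hadj.2 ⟨hadj.1, Sym2.mem_mk_left _ _⟩

theorem lt_edgeConn_of_forall_connected [Nontrivial V] {k : ℕ}
    (h : ∀ S ⊆ G.edgeSet, S.ncard ≤ k → (G.deleteEdges S).Connected) : k < edgeConn G := by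
  have hne : {m | ∃ S ⊆ G.edgeSet, S.ncard = m ∧ ¬ (G.deleteEdges S).Connected}.Nonempty :=
    ⟨_, G.edgeSet, subset_rfl, rfl, by simpa using not_connected_bot⟩
  obtain ⟨S, hSG, hS, hdisc⟩ := Nat.sInf_mem hne
  by_contra! hk
  exact hdisc (h S hSG (hS.trans_le hk))

theorem connected_deleteEdges_of_two_dominating [Finite V] {p q : V} (hpq : p ≠ q)
    (hp : ∀ v, v ≠ p → G.Adj p v) (hq : ∀ v, v ≠ q → G.Adj q v)
    (hnbr : ∀ u, u ≠ p → u ≠ q → ∃ t, t ≠ p ∧ t ≠ q ∧ G.Adj u t)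
    (hV : 5 ≤ Nat.card V) {S : Set (Sym2 V)} (hS : S.ncard ≤ 2) :
    ((G.deleteEdges {s(p, q)}).deleteEdges S).Connected := by
  set H := (G.deleteEdges {s(p, q)}).deleteEdges S
  have hadj : ∀ {x y}, G.Adj x y → x ≠ p → x ≠ q → s(x, y) ∉ S → H.Adj x y := by
    intro x y hxy hxp hxq hxyS
    simp [H, hxy, hxyS, hxp, hxq]
  obtain ⟨w, hwp, hwq, hpw, hqw⟩ :=
    Sym2.exists_mk_notMem_of_ncard_add_two_lt hpq (S := S) (by omega)
  have hreach_pq : H.Reachable p q :=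
    (hadj (hp w hwp).symm hwp hwq (by rwa [Sym2.eq_swap])).reachable.symm.trans
      (hadj (hq w hwq).symm hwp hwq (by rwa [Sym2.eq_swap])).reachable
  refine (connected_iff_exists_forall_reachable _).mpr ⟨p, fun u => ?_⟩
  by_cases hup : u = p
  · rw [hup]
  by_cases huq : u = q
  · rwa [huq]
  by_cases hpu : s(p, u) ∈ S
  swap
  · exact (hadj (hp u hup).symm hup huq (by rwa [Sym2.eq_swap])).reachable.symm
  by_cases hqu : s(q, u) ∈ S
  swap
  · exact hreach_pq.trans (hadj (hq u huq).symm hup huq (by rwa [Sym2.eq_swap])).reachable.symm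
  have hSeq : S = {s(p, u), s(q, u)} := by
    refine (Set.eq_of_subset_of_ncard_le (Set.pair_subset hpu hqu) ?_).symm
    rwa [Set.ncard_pair (by simp [hpq, Ne.symm hup])]
  obtain ⟨t, htp, htq, hut⟩ := hnbr u hup huq
  have htp_adj : H.Adj t p := hadj (hp t htp).symm htp htq (by
    simp [hSeq, htp, htq, hut.ne.symm])
  have hut_adj : H.Adj u t := hadj hut hup huq (by simp [hSeq, hup, huq, htp, htq])
  exact htp_adj.reachable.symm.trans hut_adj.reachable.symm

end SimpleGraph

open Subgroup

section EnhancedPowerGraph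

variable {Γ : Type*} [Group Γ] {x y : Γ}

theorem enhancedPowerGraph_adj :
    (enhancedPowerGraph Γ).Adj x y ↔ x ≠ y ∧ ∃ z, x ∈ zpowers z ∧ y ∈ zpowers z := by
  rw [enhancedPowerGraph, SimpleGraph.fromRel_adj,
    or_iff_left_of_imp fun ⟨z, hy, hx⟩ => ⟨z, hx, hy⟩]

theorem enhancedPowerGraph_adj_one (hx : x ≠ 1) : (enhancedPowerGraph Γ).Adj 1 x :=
  enhancedPowerGraph_adj.mpr ⟨hx.symm, x, one_mem _, mem_zpowers x⟩

theorem enhancedPowerGraph_adj_inv (hx : x⁻¹ ≠ x) : (enhancedPowerGraph Γ).Adj x x⁻¹ :=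
  enhancedPowerGraph_adj.mpr ⟨hx.symm, x, mem_zpowers x, inv_mem (mem_zpowers x)⟩

theorem gDeg_enhancedPowerGraph_le [Finite Γ] (hx : ∀ z, x ∈ zpowers z → z ∈ zpowers x) :
    gDeg (enhancedPowerGraph Γ) x ≤ orderOf x - 1 := by
  have hsub : (enhancedPowerGraph Γ).neighborSet x ⊆ (zpowers x : Set Γ) \ {x} := by
    intro y hy
    obtain ⟨hxy, z, hxz, hyz⟩ := enhancedPowerGraph_adj.mp hy
    exact ⟨zpowers_le.mpr (hx z hxz) hyz, hxy.symm⟩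
  calc gDeg (enhancedPowerGraph Γ) x
      _ ≤ ((zpowers x : Set Γ) \ {x}).ncard := Set.ncard_le_ncard hsub
      _ = orderOf x - 1 := by
        rw [Set.ncard_sdiff_singleton_of_mem (mem_zpowers x), ← Nat.card_zpowers]; rfl

end EnhancedPowerGraph

theorem ZMod.natCast_ne_zero_two_mul {n : ℕ} [NeZero n] : (n : ZMod (2 * n)) ≠ 0 := by
  rw [Ne, ZMod.natCast_eq_zero_iff]
  exact Nat.not_dvd_of_pos_of_lt (Nat.pos_of_neZero n) (by have := NeZero.ne n; omega)

namespace QuaternionGroup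

variable {n : ℕ}

theorem a_n_ne_one [NeZero n] : (a n : QuaternionGroup n) ≠ 1 :=
  fun h => ZMod.natCast_ne_zero_two_mul (a.inj h)

theorem inv_a_n : (a n : QuaternionGroup n)⁻¹ = a n :=
  congrArg a (neg_eq_of_add_eq_zero_left (by rw [← Nat.cast_add, ← two_mul, ZMod.natCast_self]))

theorem inv_ne_a_n {u : QuaternionGroup n} (hu : u ≠ a n) : u⁻¹ ≠ a n := by
  rwa [Ne, inv_eq_iff_eq_inv, inv_a_n]

theorem inv_ne_self [NeZero n] {u : QuaternionGroup n} (hu1 : u ≠ 1) (hun : u ≠ a n) :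
    u⁻¹ ≠ u := by
  cases u with
  | a i =>
    intro h
    have hi : -i = i := a.inj h
    rcases (ZMod.neg_eq_self_iff i).mp hi with rfl | hval
    · exact hu1 rfl
    · refine hun (congrArg a ?_)
      rw [← ZMod.natCast_zmod_val i, Nat.mul_left_cancel two_pos hval]
  | xa i =>
    intro h
    have hi : n + i = i := xa.inj h
    exact ZMod.natCast_ne_zero_two_mul (add_eq_right.mp hi)

theorem mem_zpowers_a_one [NeZero n] (i : ZMod (2 * n)) :
    a i ∈ zpowers (a 1 : QuaternionGroup n) := by
  simpa [a_one_pow] using npow_mem_zpowers (a 1 : QuaternionGroup n) i.val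

theorem xa_notMem_zpowers_a_one [NeZero n] (i : ZMod (2 * n)) :
    xa i ∉ zpowers (a 1 : QuaternionGroup n) := by
  intro h
  obtain ⟨k, hk⟩ := mem_powers_iff_mem_zpowers.mpr h
  simp [a_one_pow] at hk

theorem mem_zpowers_of_xa_mem [NeZero n] {i : ZMod (2 * n)} {z : QuaternionGroup n}
    (h : xa i ∈ zpowers z) : z ∈ zpowers (xa i) := by
  cases z with
  | a j => exact absurd (zpowers_le.mpr (mem_zpowers_a_one j) h) (xa_notMem_zpowers_a_one i)
  | xa j =>
    have hcard : Nat.card (zpowers (xa j)) ≤ Nat.card (zpowers (xa i)) := by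
      rw [Nat.card_zpowers, Nat.card_zpowers, orderOf_xa, orderOf_xa]
    rw [eq_of_le_of_card_ge (zpowers_le.mpr h) hcard]
    exact mem_zpowers _

theorem enhancedPowerGraph_adj_a_n [NeZero n] {u : QuaternionGroup n} (hu : u ≠ a n) :
    (enhancedPowerGraph (QuaternionGroup n)).Adj (a n) u := by
  refine enhancedPowerGraph_adj.mpr ⟨hu.symm, ?_⟩
  cases u with
  | a i => exact ⟨a 1, mem_zpowers_a_one _, mem_zpowers_a_one i⟩
  | xa i => exact ⟨xa i, xa_sq i ▸ npow_mem_zpowers _ 2, mem_zpowers _⟩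

end QuaternionGroup

open QuaternionGroup

/-- For `n ≥ 2`, the enhanced power graph of the generalized
quaternion group of order `4n` is not minimally edge connected. -/
theorem stmt_5 (n : ℕ) (hn : 2 ≤ n) :
    ¬ MinEdgeConnected (enhancedPowerGraph (QuaternionGroup n)) := by
  have : NeZero n := ⟨by omega⟩
  set G := enhancedPowerGraph (QuaternionGroup n)
  intro hmin
  have hε : s(1, a n) ∈ G.edgeSet := enhancedPowerGraph_adj_one a_n_ne_one
  have hupper : edgeConn G ≤ 3 :=
    calc edgeConn G ≤ gDeg G (xa 0) := SimpleGraph.edgeConn_le_gDeg (u := 1) (by rintro ⟨⟩)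
      _ ≤ orderOf (xa 0 : QuaternionGroup n) - 1 :=
        gDeg_enhancedPowerGraph_le fun _ => mem_zpowers_of_xa_mem
      _ = 3 := by rw [orderOf_xa]
  have hlower : 2 < edgeConn (G.deleteEdges {s(1, a n)}) :=
    SimpleGraph.lt_edgeConn_of_forall_connected fun S _ hS =>
      SimpleGraph.connected_deleteEdges_of_two_dominating a_n_ne_one.symm
        (fun _ => enhancedPowerGraph_adj_one) (fun _ => enhancedPowerGraph_adj_a_n)
        (fun u hu1 hun => ⟨u⁻¹, inv_ne_one.mpr hu1, inv_ne_a_n hun,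
          enhancedPowerGraph_adj_inv (inv_ne_self hu1 hun)⟩)
        (by rw [Nat.card_eq_fintype_card, QuaternionGroup.card]; omega) hS
  have := hmin _ hε
  omega
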